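/- arXiv:1705.10254 — 2 statements merged into one kernel-verified Lean document; each statement's English description precedes it below -/
import Mathlib

section
/- Fix integers λ ≥ 2 and t ≥ 1. Let H be a Hamiltonian graph with m ≥ λ vertices and let u₀ be a vertex of H. If the degree of u₀ in H is at least 2t - 1 + max{2λ - m - 1, 2}, then there exists an integer l ≥ λ such that H contains a copy of the keyring C_t(l) whose center is u₀. -/
/-!
Enumerate a Hamiltonian cycle as `u₀ = v₀, v₁, …, v_{m-1}` and let `e₀ < ⋯ < e_{d-1}` be
the positions of the `d` neighbours of `u₀`, so `e₀ = 1` and `e_{d-1} = m - 1`. For `s ≤ t`,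
the chord cycle `u₀ v_{e_s} v_{e_s + 1} … v_{e_{d-t-1+s}} u₀` has length
`e_{d-t-1+s} - e_s + 2` and misses exactly `t` neighbours of `u₀`, which serve as the leaves.
If all `t + 1` of these cycles were shorter than `λ`, then, as `e_{d-t-1} - e_t ≥ d - 2t - 1`,
the cycles for `s = 0` and `s = t` would force `m - 2 = e_{d-1} - e₀ < 2(λ - 2) - (d - 2t)`,
against the degree bound.
-/

/-- The keyring `C_r(l)`: a cycle of length `l` (on `Fin l`, defined for `l ≥ 3`)
with `r` pendant leaves (the vertices `Fin r`) appended to the cycle vertex `Sum.inl 0`,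
which is the center of the keyring. -/
def keyring (l r : ℕ) : SimpleGraph (Fin l ⊕ Fin r) :=
  SimpleGraph.fromRel (fun a b =>
    match a, b with
    | Sum.inl i, Sum.inl j => (i.val + 1) % l = j.val
    | Sum.inl i, Sum.inr _ => i.val = 0
    | _, _ => False)

open Finset

theorem StrictMonoOn.add_le_nat {e : ℕ → ℕ} {d : ℕ} (he : StrictMonoOn e (Set.Iio d))
    {i k : ℕ} (h : i + k < d) : e i + k ≤ e (i + k) := by
  induction k with
  | zero => rfl
  | succ k ih =>
    have hstep : e (i + k) < e (i + (k + 1)) :=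
      he (show i + k < d by omega) (show i + (k + 1) < d from h) (by omega)
    have := ih (by omega)
    omega

theorem StrictMonoOn.exists_wide_window {e : ℕ → ℕ} {d t c : ℕ}
    (he : StrictMonoOn e (Set.Iio d)) (hd : 2 * t < d)
    (hc : 2 * c ≤ d - 2 * t + (e (d - 1) - e 0)) :
    ∃ s ≤ t, c ≤ e (d - t - 1 + s) - e s := by
  by_contra! hnarrow
  have hleft := hnarrow 0 (Nat.zero_le t)
  have hright := hnarrow t le_rfl
  have hmiddle := he.add_le_nat (i := t) (k := d - 2 * t - 1) (by omega)
  have hle_left := he.monotoneOn (show 0 < d by omega) (show t < d by omega) (Nat.zero_le t)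
  have hle_right := he.monotoneOn (show t < d by omega) (show d - 1 < d by omega) (by omega)
  rw [show t + (d - 2 * t - 1) = d - t - 1 by omega] at hmiddle
  rw [show d - t - 1 + t = d - 1 by omega] at hright
  simp only [add_zero] at hleft
  omega

theorem Finset.exists_wide_window (S : Finset ℕ) {t c lo hi : ℕ} (hlo : lo ∈ S)
    (hhi : hi ∈ S) (ht : 2 * t < #S) (h2 : 2 ≤ #S) (hc : 2 * c ≤ #S - 2 * t + (hi - lo)) :
    ∃ a ∈ S, ∃ b ∈ S, a < b ∧ c ≤ b - a ∧
      ∃ g : Fin t → ℕ, Function.Injective g ∧ ∀ j, g j ∈ S ∧ (g j < a ∨ b < g j) := by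
  set d := #S
  have hf : (Set.ofPred (· ∈ S)).Finite := S.finite_toSet
  have hcard : #hf.toFinset = d := by simp [d]
  have he : StrictMonoOn (Nat.nth (· ∈ S)) (Set.Iio d) := hcard ▸ Nat.nth_strictMonoOn hf
  have hmem : ∀ k < d, Nat.nth (· ∈ S) k ∈ S := fun k hk =>
    Nat.nth_mem_of_lt_card hf (hcard ▸ hk)
  have hsurj : ∀ x ∈ S, ∃ k < d, Nat.nth (· ∈ S) k = x := fun x hx =>
    hcard ▸ Nat.exists_lt_card_finite_nth_eq hf hx
  generalize Nat.nth (· ∈ S) = e at he hmem hsurj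
  have hspread : hi - lo ≤ e (d - 1) - e 0 := by
    obtain ⟨i, hid, rfl⟩ := hsurj lo hlo
    obtain ⟨j, hj, rfl⟩ := hsurj hi hhi
    have := he.monotoneOn (show 0 < d by omega) hid (Nat.zero_le i)
    have := he.monotoneOn hj (show d - 1 < d by omega) (by omega)
    omega
  obtain ⟨s, hst, hwide⟩ := he.exists_wide_window ht (c := c) (by omega)
  have hlt : ∀ {i j}, i < j → j < d → e i < e j := fun hij hj => he (hij.trans hj) hj hij
  refine ⟨e s, hmem s (by omega), e (d - t - 1 + s), hmem _ (by omega),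
    hlt (by omega) (by omega), hwide, fun j => e (if j < s then j else d - t + j), ?_,
    fun j => ⟨hmem _ ?_, ?_⟩⟩
  · intro j j' hjj'
    have := he.injOn (show (if (j : ℕ) < s then (j : ℕ) else d - t + j) < d by split <;> omega)
      (show (if (j' : ℕ) < s then (j' : ℕ) else d - t + j') < d by split <;> omega) hjj'
    ext
    split at this <;> split at this <;> omega
  · split <;> omega
  · dsimp only
    split
    · exact .inl (hlt (by omega) (by omega))
    · exact .inr (hlt (by omega) (by omega))

theorem keyring_adj_sumElim {V : Type*} {G : SimpleGraph V} {l t : ℕ} {c : Fin l → V}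
    {w : Fin t → V} (hc : ∀ i j : Fin l, (i.val + 1) % l = j.val → G.Adj (c i) (c j))
    (hw : ∀ (i : Fin l) (j : Fin t), i.val = 0 → G.Adj (c i) (w j)) (x y : Fin l ⊕ Fin t) :
    (keyring l t).Adj x y → G.Adj (Sum.elim c w x) (Sum.elim c w y) := by
  rw [keyring, SimpleGraph.fromRel_adj]
  rintro ⟨-, h | h⟩ <;> rcases x with i | i <;> rcases y with j | j <;>
    first | exact h.elim | simp only [Sum.elim_inl, Sum.elim_inr]
  exacts [hc i j h, hw i j h, (hc j i h).symm, (hw j i h).symm]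

namespace SimpleGraph.Walk

variable {V : Type*} {G : SimpleGraph V} {u : V}

/-- The cycle `u, p_a, p_{a+1}, …, p_b` that leaves the closed walk `p` along the chords
`u p_a` and `p_b u`. -/
def chordCycle (p : G.Walk u u) (a b : ℕ) (k : Fin (b - a + 2)) : V :=
  p.getVert (if k.val = 0 then 0 else a + k - 1)

theorem chordCycle_of_val_eq_zero (p : G.Walk u u) {a b : ℕ} {k : Fin (b - a + 2)}
    (hk : k.val = 0) : p.chordCycle a b k = u := by
  simp [chordCycle, hk]

theorem chordCycle_adj (p : G.Walk u u) {a b : ℕ} (hab : a ≤ b) (hb : b < p.length)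
    (ha : G.Adj u (p.getVert a)) (hb' : G.Adj u (p.getVert b)) (i j : Fin (b - a + 2))
    (hij : (i.val + 1) % (b - a + 2) = j.val) :
    G.Adj (p.chordCycle a b i) (p.chordCycle a b j) := by
  have hi := i.isLt
  unfold chordCycle
  by_cases hi0 : i.val = 0
  · rw [hi0, Nat.mod_eq_of_lt (by omega)] at hij
    simpa [hi0, ← hij] using ha
  by_cases hlast : i.val = b - a + 1
  · rw [hlast, Nat.mod_self] at hij
    simpa [hlast, ← hij, show a + (b - a + 1) - 1 = b by omega] using hb'.symm
  rw [Nat.mod_eq_of_lt (by omega)] at hij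
  simpa [hi0, ← hij, show a + (i + 1) - 1 = a + i - 1 + 1 by omega] using
    p.adj_getVert_succ (i := a + i - 1) (by omega)

theorem IsCycle.chordCycle_injective {p : G.Walk u u} (hp : p.IsCycle) {a b : ℕ} (ha : 1 ≤ a)
    (hab : a ≤ b) (hb : b < p.length) : Function.Injective (p.chordCycle a b) := by
  intro i j hij
  have := i.isLt
  have := j.isLt
  have := hp.getVert_injOn' (by simp only [Set.mem_ofPred_eq]; split <;> omega)
    (by simp only [Set.mem_ofPred_eq]; split <;> omega) hij
  ext
  split at this <;> split at this <;> omega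

theorem IsCycle.chordCycle_ne_getVert {p : G.Walk u u} (hp : p.IsCycle) {a b i : ℕ}
    (hab : a ≤ b) (hb : b < p.length) (hi : 1 ≤ i) (hin : i < p.length) (hout : i < a ∨ b < i)
    (k : Fin (b - a + 2)) :
    p.chordCycle a b k ≠ p.getVert i := by
  intro h
  have := k.isLt
  have := hp.getVert_injOn' (by simp only [Set.mem_ofPred_eq]; split <;> omega)
    (by simp only [Set.mem_ofPred_eq]; omega) h
  split at this <;> omega

theorem IsCycle.getVert_comp_injective {ι : Type*} {p : G.Walk u u} (hp : p.IsCycle)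
    {g : ι → ℕ} (hg : Function.Injective g) (hlt : ∀ j, g j < p.length) :
    Function.Injective (p.getVert ∘ g) :=
  fun j j' h => hg <| hp.getVert_injOn' (by simpa using Nat.le_sub_one_of_lt (hlt j))
    (by simpa using Nat.le_sub_one_of_lt (hlt j')) h

theorem IsHamiltonianCycle.degree_le_card_filter [Fintype V] [DecidableEq V]
    [DecidableRel G.Adj] {p : G.Walk u u} (hp : p.IsHamiltonianCycle) :
    G.degree u ≤ #{k ∈ Ico 1 p.length | G.Adj u (p.getVert k)} := by
  refine card_le_card_of_surjOn p.getVert fun w hw => ?_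
  rw [coe_neighborFinset, mem_neighborSet] at hw
  obtain ⟨k, rfl, hk⟩ := mem_support_iff_exists_getVert.mp (hp.mem_support w)
  have hk0 : k ≠ 0 := by rintro rfl; simp at hw
  have hkl : k ≠ p.length := by rintro rfl; simp at hw
  exact ⟨k, by simp only [coe_filter, mem_Ico, Set.mem_ofPred_eq]; exact ⟨by omega, hw⟩, rfl⟩

end SimpleGraph.Walk

/-- Let `λ ≥ 2`, `t ≥ 1`, and let `H` be a Hamiltonian graph on `m ≥ λ` vertices with a
vertex `u₀` of degree at least `2t - 1 + max (2λ - m - 1) 2`.  Then there is `l ≥ λ`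
such that `H` contains a copy of the keyring `C_t(l)` whose center is `u₀`. -/
theorem keyring_in_hamiltonian {V : Type*} [Fintype V]
    [DecidableEq V]
    (lam t : ℕ)
    (H : SimpleGraph V) [DecidableRel H.Adj]
    (hHam : H.IsHamiltonian)
    (u₀ : V)
    (hdeg : 2 * t - 1 + max (2 * lam - Fintype.card V - 1) 2 ≤ H.degree u₀) :
    ∃ (l : ℕ) (hl : 3 ≤ l), lam ≤ l ∧
      ∃ f : (Fin l ⊕ Fin t) → V, Function.Injective f ∧
        (∀ a b, (keyring l t).Adj a b → H.Adj (f a) (f b)) ∧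
        f (Sum.inl ⟨0, by omega⟩) = u₀ := by
  obtain ⟨w, hw⟩ := H.degree_pos_iff_exists_adj u₀ |>.mp (by omega)
  have : Nontrivial V := ⟨⟨u₀, w, hw.ne⟩⟩
  obtain ⟨p, hp⟩ := hHam.exists_isHamiltonianCycle u₀
  have hlen : p.length = Fintype.card V := hp.length_eq
  have hlen3 := hp.isCycle.three_le_length
  set S := {k ∈ Ico 1 p.length | H.Adj u₀ (p.getVert k)}
  have hS : ∀ {k}, k ∈ S ↔ (1 ≤ k ∧ k < p.length) ∧ H.Adj u₀ (p.getVert k) := by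
    simp [S]
  have hfirst : 1 ∈ S := hS.2 ⟨by omega, p.adj_snd hp.isCycle.not_nil⟩
  have hlast : p.length - 1 ∈ S :=
    hS.2 ⟨by omega, (p.adj_penultimate hp.isCycle.not_nil).symm⟩
  have hdegS : H.degree u₀ ≤ #S := hp.degree_le_card_filter
  obtain ⟨a, ha, b, hb, hab, hwide, g, hg, hgS⟩ :=
    S.exists_wide_window (t := t) (c := lam - 2) hfirst hlast (by omega) (by omega) (by omega)
  rw [hS] at ha hb
  have hleaf : ∀ j, (1 ≤ g j ∧ g j < p.length) ∧ H.Adj u₀ (p.getVert (g j)) :=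
    fun j => hS.1 (hgS j).1
  refine ⟨b - a + 2, by omega, by omega, Sum.elim (p.chordCycle a b) (p.getVert ∘ g), ?_,
    keyring_adj_sumElim (p.chordCycle_adj hab.le (by omega) ha.2 hb.2)
      (fun i j hi => ?_), p.chordCycle_of_val_eq_zero rfl⟩
  · exact (hp.isCycle.chordCycle_injective ha.1.1 hab.le hb.1.2).sumElim
      (hp.isCycle.getVert_comp_injective hg fun j => (hleaf j).1.2) fun k j =>
        hp.isCycle.chordCycle_ne_getVert hab.le hb.1.2 (hleaf j).1.1 (hleaf j).1.2 (hgS j).2 k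
  · rw [p.chordCycle_of_val_eq_zero hi]
    exact (hleaf j).2
end

section
/- If a finite simple graph G is k-minimal, then for every nonempty subset X of the vertices of G, the number of edges of G having at least one endpoint in X is strictly greater than (k-1)/2 · |X|. -/
/-- A finite simple graph `G` is `k`-minimal if `2·e(G) > (k-1)·v(G)` but no proper
subgraph `H` of `G` satisfies `2·e(H) > (k-1)·v(H)`. -/
def IsKMinimal (k : ℕ) {V : Type*} [Fintype V] (G : SimpleGraph V) : Prop :=
  2 * G.edgeSet.ncard > (k - 1) * Fintype.card V ∧
    ∀ H : G.Subgraph, H ≠ ⊤ → ¬ (2 * H.edgeSet.ncard > (k - 1) * H.verts.ncard)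

/-!
Delete the vertices of `X`. What remains is a proper subgraph `H` of `G`, so by minimality
`2·e(H) ≤ (k-1)·(v(G) - |X|)`. The edges of `G` split into those of `H` and the `d_G(X)` edges
meeting `X`; subtracting the bound for `H` from `2·e(G) > (k-1)·v(G)` leaves
`2·d_G(X) > (k-1)·|X|`.
-/

namespace SimpleGraph

variable {V : Type*} {G : SimpleGraph V}

theorem Subgraph.edgeSet_deleteVerts (G' : G.Subgraph) (s : Set V) :
    (G'.deleteVerts s).edgeSet = {e ∈ G'.edgeSet | ∀ v ∈ e, v ∉ s} := by
  ext e
  induction e with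
  | _ u v =>
    simp only [Subgraph.mem_edgeSet, Subgraph.deleteVerts_adj, Set.mem_ofPred_eq, Sym2.mem_iff,
      forall_eq_or_imp, forall_eq]
    constructor
    · rintro ⟨-, hu, -, hv, hadj⟩
      exact ⟨hadj, hu, hv⟩
    · rintro ⟨hadj, hu, hv⟩
      exact ⟨G'.edge_vert hadj, hu, G'.edge_vert hadj.symm, hv, hadj⟩

theorem ncard_edgeSet_eq_ncard_incident_add_ncard_deleteVerts [Finite V] (s : Set V) :
    G.edgeSet.ncard = {e ∈ G.edgeSet | ∃ v ∈ s, v ∈ e}.ncard +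
      ((⊤ : G.Subgraph).deleteVerts s).edgeSet.ncard := by
  have hsplit : {e ∈ G.edgeSet | ∃ v ∈ s, v ∈ e} = G.edgeSet ∩ {e | ∃ v ∈ s, v ∈ e} := rfl
  have hrest : ((⊤ : G.Subgraph).deleteVerts s).edgeSet = G.edgeSet \ {e | ∃ v ∈ s, v ∈ e} := by
    rw [Subgraph.edgeSet_deleteVerts, Subgraph.edgeSet_top]
    ext e
    simp only [Set.mem_ofPred_eq, Set.mem_sdiff, not_exists, not_and]
    exact and_congr_right fun _ => forall_congr' fun v => imp_not_comm
  rw [hsplit, hrest, Set.ncard_inter_add_ncard_sdiff_eq_ncard]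

theorem Subgraph.top_deleteVerts_ne_top {s : Set V} (hs : s.Nonempty) :
    (⊤ : G.Subgraph).deleteVerts s ≠ ⊤ := fun h => by
  obtain ⟨x, hx⟩ := hs
  have hx' : x ∈ ((⊤ : G.Subgraph).deleteVerts s).verts := by rw [h]; trivial
  exact hx'.2 hx

theorem Subgraph.ncard_verts_top_deleteVerts (s : Set V) :
    ((⊤ : G.Subgraph).deleteVerts s).verts.ncard = sᶜ.ncard := by
  rw [Subgraph.deleteVerts_verts, Subgraph.verts_top, Set.compl_eq_univ_sdiff]

end SimpleGraph

/-- If `G` is `k`-minimal, then for every nonempty set `X` of vertices, the number of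
edges of `G` with at least one endpoint in `X` is strictly more than `(k-1)/2 · |X|`
(stated multiplied through by `2`). -/
theorem kMinimal_edge_bound {V : Type*} [Fintype V] (k : ℕ)
    (G : SimpleGraph V) (hG : IsKMinimal k G) :
    ∀ X : Finset V, X.Nonempty →
      (k - 1) * X.card < 2 * {e ∈ G.edgeSet | ∃ v ∈ X, v ∈ e}.ncard := by
  intro X hX
  obtain ⟨hGdense, hGmin⟩ := hG
  have hHsparse := hGmin _ (SimpleGraph.Subgraph.top_deleteVerts_ne_top (Finset.coe_nonempty.2 hX))
  rw [SimpleGraph.Subgraph.ncard_verts_top_deleteVerts] at hHsparse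
  have hsplit := SimpleGraph.ncard_edgeSet_eq_ncard_incident_add_ncard_deleteVerts (G := G) X
  simp only [Finset.mem_coe] at hsplit
  have hcard : X.card + (X : Set V)ᶜ.ncard = Fintype.card V := by
    rw [← Set.ncard_coe_finset, Set.ncard_add_ncard_compl, Nat.card_eq_fintype_card]
  rw [← hcard, Nat.mul_add] at hGdense
  omega
end
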